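/- arXiv:math/0701279 — 2 statements merged into one kernel-verified Lean document; each statement's English description precedes it below -/
import Mathlib

section
/- Let (Ω, F, P) be a probability space, let (x_n)_{n≥1} be independent real-valued random variables with ⟨x_n⟩ = 0 for every n, let f_n : ℝ^ℕ → ℝ be measurable for each n (product σ-algebra), and set z_n(ω) = x_n(ω) · f_n(x_{n+1}(ω), x_{n+2}(ω), …). Assume Σ_{n=1}^∞ ⟨z_n²⟩ < ∞. Then the series Σ_{n=1}^∞ z_n(ω) converges for P-almost every ω, and moreover for every n ≥ 1 one has ⟨(Σ_{j=n}^∞ z_j)²⟩ ≤ Σ_{j=1}^∞ ⟨z_j²⟩. -/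
open MeasureTheory ProbabilityTheory Filter
open scoped ENNReal Topology

private def BLz (f : ℕ → (ℕ → ℝ) → ℝ) (j l : ℕ) : (ℕ → ℝ) → ℝ :=
  fun v => v (l - (j + 1)) * f l (fun m => v (l - j + m))

private def BLR (f : ℕ → (ℕ → ℝ) → ℝ) (j k N : ℕ) : (ℕ → ℝ) → ℝ :=
  fun v => ∑ l ∈ Finset.Ico k N, BLz f j l v

private lemma BLz_meas {f : ℕ → (ℕ → ℝ) → ℝ} (hf : ∀ n, Measurable (f n)) (j l : ℕ) :
    Measurable (BLz f j l) :=
  (measurable_pi_apply _).mul ((hf l).comp (measurable_pi_lambda _ fun _ => measurable_pi_apply _))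

private lemma BLR_meas {f : ℕ → (ℕ → ℝ) → ℝ} (hf : ∀ n, Measurable (f n)) (j k N : ℕ) :
    Measurable (BLR f j k N) :=
  Finset.measurable_sum _ fun l _ => BLz_meas hf j l

private lemma BL_int_mul {Ω : Type*} [MeasurableSpace Ω] {P : Measure Ω}
    {g h : Ω → ℝ} (hg : MemLp g 2 P) (hh : MemLp h 2 P) :
    Integrable (fun ω => g ω * h ω) P := by
  have h1 : (1:ℝ≥0∞) / 1 = 1 / 2 + 1 / 2 := by
    rw [ENNReal.div_add_div_same, one_add_one_eq_two,
      ENNReal.div_self two_ne_zero ENNReal.ofNat_ne_top, one_div_one]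
  have : MemLp (g • h) 1 P := hh.smul (𝕜 := ℝ) hg
  rw [← memLp_one_iff_integrable]
  exact this

/-- Theorem 2.3 of Breuer–Last: let `x n` be independent
mean-zero random variables and `z n ω = x n ω * f n (x (n+1) ω, x (n+2) ω, …)`
with each `f n` measurable for the product σ-algebra.  If `∑ ⟨z n ^ 2⟩ < ∞`,
then `∑ z n` converges almost surely, and for every `n`,
`⟨(∑_{j=n}^∞ z j)²⟩ ≤ ∑_{j=1}^∞ ⟨z j ^ 2⟩`. -/
theorem random_series_converges_of_summable_variance
    {Ω : Type*} [MeasurableSpace Ω] (P : Measure Ω) [IsProbabilityMeasure P]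
    (x : ℕ → Ω → ℝ) (hxmeas : ∀ n, Measurable (x n))
    (hindep : iIndepFun x P)
    (hmean : ∀ n, ∫ ω, x n ω ∂P = 0)
    (f : ℕ → (ℕ → ℝ) → ℝ) (hf : ∀ n, Measurable (f n))
    (z : ℕ → Ω → ℝ)
    (hz : ∀ n ω, z n ω = x n ω * f n (fun k => x (n + 1 + k) ω))
    (hsum : ∑' n, ∫⁻ ω, ENNReal.ofReal ((z n ω) ^ 2) ∂P < ⊤) :
    (∀ᵐ ω ∂P, ∃ l : ℝ,
        Tendsto (fun N => ∑ j ∈ Finset.range N, z j ω) atTop (𝓝 l)) ∧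
      ∀ n, ∫⁻ ω, ENNReal.ofReal
            ((limUnder atTop fun N => ∑ j ∈ Finset.Icc n N, z j ω) ^ 2) ∂P ≤
          ∑' j, ∫⁻ ω, ENNReal.ofReal ((z j ω) ^ 2) ∂P := by
  classical
  have hzm : ∀ n, Measurable (z n) := by
    intro n
    have hzn : z n = fun ω => x n ω * f n (fun k => x (n + 1 + k) ω) := funext (hz n)
    rw [hzn]
    exact (hxmeas n).mul ((hf n).comp (measurable_pi_lambda _ fun k => hxmeas _))
  set V : ℕ → ℝ≥0∞ := fun j => ∫⁻ ω, ENNReal.ofReal (z j ω ^ 2) ∂P with hV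
  have hz2int : ∀ j, Integrable (fun ω => z j ω ^ 2) P := by
    intro j
    refine ⟨((hzm j).pow_const 2).aestronglyMeasurable, ?_⟩
    rw [hasFiniteIntegral_iff_ofReal (Filter.Eventually.of_forall fun ω => sq_nonneg _)]
    exact lt_of_le_of_lt (ENNReal.le_tsum j) hsum
  have hVeq : ∀ l, ENNReal.ofReal (∫ ω, z l ω ^ 2 ∂P) = V l := fun l =>
    ofReal_integral_eq_lintegral_ofReal (hz2int l)
      (Filter.Eventually.of_forall fun ω => sq_nonneg _)
  have hzL2 : ∀ j, MemLp (z j) 2 P := fun j =>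
    (memLp_two_iff_integrable_sq (hzm j).aestronglyMeasurable).2 (hz2int j)
  have hmul : ∀ i j, Integrable (fun ω => z i ω * z j ω) P := fun i j =>
    BL_int_mul (hzL2 i) (hzL2 j)
  -- independence
  have hPhiInd : ∀ j, IndepFun (x j) (fun ω (k : ℕ) => x (j + 1 + k) ω) P := by
    intro j
    have hkey : Indep (MeasurableSpace.comap (x j) inferInstance)
        (⨆ i ∈ ({j} : Set ℕ)ᶜ, MeasurableSpace.comap (x i) inferInstance) P := by
      have := indep_biSup_compl (fun i => (hxmeas i).comap_le) hindep {j}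
      simpa using this
    have hle : MeasurableSpace.comap (fun ω (k : ℕ) => x (j + 1 + k) ω) MeasurableSpace.pi ≤
        ⨆ i ∈ ({j} : Set ℕ)ᶜ, MeasurableSpace.comap (x i) inferInstance := by
      rw [MeasurableSpace.pi, MeasurableSpace.comap_iSup]
      refine iSup_le fun k => ?_
      rw [MeasurableSpace.comap_comp]
      exact le_iSup₂ (f := fun i (_ : i ∈ ({j} : Set ℕ)ᶜ) =>
        MeasurableSpace.comap (x i) inferInstance) (j + 1 + k) (by simp; omega)
    exact indep_of_indep_of_le_right hkey hle
  have hcross0 : ∀ (j : ℕ) (H : (ℕ → ℝ) → ℝ), Measurable H →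
      ∫ ω, z j ω * H (fun k => x (j + 1 + k) ω) ∂P = 0 := by
    intro j H hH
    have hind : IndepFun (x j) (fun ω => (fun v => f j v * H v) (fun k => x (j + 1 + k) ω)) P :=
      (hPhiInd j).comp measurable_id ((hf j).mul hH)
    have hmeasg : AEStronglyMeasurable
        (fun ω => (fun v => f j v * H v) (fun k => x (j + 1 + k) ω)) P :=
      (((hf j).mul hH).comp (measurable_pi_lambda _ fun k => hxmeas _)).aestronglyMeasurable
    have := IndepFun.integral_mul_eq_mul_integral hind (hxmeas j).aestronglyMeasurable hmeasg
    have heq : (fun ω => z j ω * H (fun k => x (j + 1 + k) ω)) =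
        (x j * fun ω => (fun v => f j v * H v) (fun k => x (j + 1 + k) ω)) := by
      funext ω; simp only [Pi.mul_apply]; rw [hz]; ring
    rw [heq, this, hmean j, zero_mul]
  -- tail partial sums
  set R : ℕ → ℕ → Ω → ℝ := fun k N ω => ∑ l ∈ Finset.Ico k N, z l ω with hR
  have hRm : ∀ k N, Measurable (R k N) := fun k N => Finset.measurable_sum _ fun l _ => hzm l
  have hRL2 : ∀ k N, MemLp (R k N) 2 P := fun k N => memLp_finset_sum _ fun l _ => hzL2 l
  have hBLz_eq : ∀ j l, j < l → ∀ ω, BLz f j l (fun k => x (j + 1 + k) ω) = z l ω := by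
    intro j l hjl ω
    have h1 : j + 1 + (l - (j + 1)) = l := by omega
    have h2 : (fun m => x (j + 1 + (l - j + m)) ω) = fun m => x (l + 1 + m) ω := by
      funext m; congr 1; omega
    show x (j + 1 + (l - (j + 1))) ω * f l (fun m => x (j + 1 + (l - j + m)) ω) = z l ω
    rw [hz, h1, h2]
  have hBLR_eq : ∀ j k N, j < k → ∀ ω, BLR f j k N (fun m => x (j + 1 + m) ω) = R k N ω := by
    intro j k N hjk ω
    exact Finset.sum_congr rfl fun l hl =>
      hBLz_eq j l (lt_of_lt_of_le hjk (Finset.mem_Ico.1 hl).1) ω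
  have horth : ∀ i j, i < j → ∫ ω, z i ω * z j ω ∂P = 0 := by
    intro i j hij
    have h0 := hcross0 i (BLz f i j) (BLz_meas hf i j)
    rw [← h0]
    refine integral_congr_ae (Filter.Eventually.of_forall fun ω => ?_)
    show z i ω * z j ω = z i ω * BLz f i j fun k => x (i + 1 + k) ω
    rw [hBLz_eq i j hij ω]
  have hsumsq : ∀ n N, ∫ ω, R n N ω ^ 2 ∂P = ∑ l ∈ Finset.Ico n N, ∫ ω, z l ω ^ 2 ∂P := by
    intro n N
    have hexp : ∀ ω, R n N ω ^ 2 =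
        ∑ i ∈ Finset.Ico n N, ∑ j ∈ Finset.Ico n N, z i ω * z j ω := by
      intro ω; rw [sq]; exact Finset.sum_mul_sum _ _ _ _
    calc ∫ ω, R n N ω ^ 2 ∂P
        = ∫ ω, ∑ i ∈ Finset.Ico n N, ∑ j ∈ Finset.Ico n N, z i ω * z j ω ∂P := by
          simp only [hexp]
      _ = ∑ i ∈ Finset.Ico n N, ∫ ω, ∑ j ∈ Finset.Ico n N, z i ω * z j ω ∂P :=
          integral_finset_sum _ fun i _ => integrable_finset_sum _ fun j _ => hmul i j
      _ = ∑ i ∈ Finset.Ico n N, ∑ j ∈ Finset.Ico n N, ∫ ω, z i ω * z j ω ∂P :=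
          Finset.sum_congr rfl fun i _ => integral_finset_sum _ fun j _ => hmul i j
      _ = ∑ i ∈ Finset.Ico n N, ∫ ω, z i ω ^ 2 ∂P := by
          refine Finset.sum_congr rfl fun i hi => ?_
          rw [Finset.sum_eq_single_of_mem i hi]
          · simp only [← sq]
          · intro j _ hne
            rcases hne.lt_or_gt with h | h
            · calc ∫ ω, z i ω * z j ω ∂P
                  = ∫ ω, z j ω * z i ω ∂P :=
                    integral_congr_ae (Filter.Eventually.of_forall fun ω => mul_comm _ _)
                _ = 0 := horth j i h
            · exact horth i j h
  -- Kolmogorov-type maximal inequality via the (reverse) martingale structure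
  have hmax : ∀ ε : ℝ, 0 < ε → ∀ n N : ℕ,
      ENNReal.ofReal (ε ^ 2) * P {ω | ∃ k, n ≤ k ∧ k ≤ N ∧ ε ≤ |R k N ω|} ≤
        ∑ l ∈ Finset.Ico n N, V l := by
    intro ε hε n N
    set A : ℕ → Set Ω := fun k =>
      {ω | ε ≤ |R k N ω|} ∩ ⋂ l ∈ Set.Ioc k N, {ω | |R l N ω| < ε} with hA
    have hAmeas : ∀ k, MeasurableSet (A k) := fun k =>
      (measurableSet_le measurable_const (hRm k N).abs).inter
        (MeasurableSet.biInter (Set.to_countable _) fun l _ =>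
          measurableSet_lt (hRm l N).abs measurable_const)
    have hcover : {ω | ∃ k, n ≤ k ∧ k ≤ N ∧ ε ≤ |R k N ω|} ⊆
        ⋃ k ∈ Finset.Icc n N, A k := by
      rintro ω ⟨k, hk1, hk2, hk3⟩
      have hTne : ((Finset.Icc n N).filter fun k' => ε ≤ |R k' N ω|).Nonempty :=
        ⟨k, Finset.mem_filter.2 ⟨Finset.mem_Icc.2 ⟨hk1, hk2⟩, hk3⟩⟩
      set k₀ := ((Finset.Icc n N).filter fun k' => ε ≤ |R k' N ω|).max' hTne with hk₀
      have hk₀T := Finset.max'_mem _ hTne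
      rw [← hk₀, Finset.mem_filter, Finset.mem_Icc] at hk₀T
      refine Set.mem_iUnion₂.2 ⟨k₀, Finset.mem_Icc.2 hk₀T.1, hk₀T.2, ?_⟩
      refine Set.mem_iInter₂.2 fun l hl => ?_
      by_contra hcon
      simp only [Set.mem_setOf_eq, not_lt] at hcon
      have hlT : l ∈ (Finset.Icc n N).filter fun k' => ε ≤ |R k' N ω| :=
        Finset.mem_filter.2 ⟨Finset.mem_Icc.2 ⟨le_trans hk₀T.1.1 hl.1.le, hl.2⟩, hcon⟩
      exact absurd (Finset.le_max' _ _ hlT) (not_le.2 hl.1)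
    have hdisj0 : ∀ a b, a < b → b ≤ N → Disjoint (A a) (A b) := by
      intro a b hab hbN
      refine Set.disjoint_left.2 fun ω hωa hωb => ?_
      have h1 : |R b N ω| < ε := Set.mem_iInter₂.1 hωa.2 b ⟨hab, hbN⟩
      exact absurd hωb.1 (not_le.2 h1)
    have hdisj : (↑(Finset.Icc n N) : Set ℕ).Pairwise (Function.onFun Disjoint A) := by
      intro a hamem b hbmem hab
      rw [Finset.coe_Icc, Set.mem_Icc] at hamem hbmem
      rcases hab.lt_or_gt with h | h
      · exact hdisj0 a b h hbmem.2
      · exact (hdisj0 b a h hamem.2).symm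
    -- key per-piece bound
    have hkey : ∀ k ∈ Finset.Icc n N,
        ε ^ 2 * (P (A k)).toReal ≤ ∫ ω in A k, R n N ω ^ 2 ∂P := by
      intro k hk
      rw [Finset.mem_Icc] at hk
      have h1 : ε ^ 2 * (P (A k)).toReal ≤ ∫ ω in A k, R k N ω ^ 2 ∂P := by
        refine setIntegral_ge_of_const_le_real (hAmeas k) (measure_ne_top P _) (fun ω hω => ?_)
          ((hRL2 k N).integrable_sq.integrableOn)
        calc ε ^ 2 ≤ |R k N ω| ^ 2 := pow_le_pow_left₀ hε.le hω.1 2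
          _ = R k N ω ^ 2 := sq_abs _
      have h2 : ∫ ω in A k, R k N ω ^ 2 ∂P ≤ ∫ ω in A k, R n N ω ^ 2 ∂P := by
        set D : Ω → ℝ := fun ω => ∑ l ∈ Finset.Ico n k, z l ω with hD
        have hDL2 : MemLp D 2 P := memLp_finset_sum _ fun l _ => hzL2 l
        set g : Ω → ℝ := (A k).indicator (R k N) with hg
        have hgL2 : MemLp g 2 P := (hRL2 k N).indicator (hAmeas k)
        have hsplit : ∀ ω, (A k).indicator (fun ω => R n N ω ^ 2) ω =
            (A k).indicator (fun ω => D ω ^ 2) ω +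
              (2 * (D ω * g ω) + (A k).indicator (fun ω => R k N ω ^ 2) ω) := by
          intro ω
          by_cases hω : ω ∈ A k
          · simp only [Set.indicator_of_mem hω, hg]
            have hRn : R n N ω = D ω + R k N ω := by
              simp only [hR, hD]
              exact (Finset.sum_Ico_consecutive _ hk.1 hk.2).symm
            rw [hRn]; ring
          · simp [Set.indicator_of_notMem hω, hg]
        have hint1 : Integrable ((A k).indicator fun ω => R n N ω ^ 2) P :=
          ((hRL2 n N).integrable_sq).indicator (hAmeas k)
        have hint2 : Integrable ((A k).indicator fun ω => D ω ^ 2) P :=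
          (hDL2.integrable_sq).indicator (hAmeas k)
        have hint3 : Integrable ((A k).indicator fun ω => R k N ω ^ 2) P :=
          ((hRL2 k N).integrable_sq).indicator (hAmeas k)
        have hint4 : Integrable (fun ω => 2 * (D ω * g ω)) P :=
          (BL_int_mul hDL2 hgL2).const_mul 2
        have hcrossg : ∫ ω, D ω * g ω ∂P = 0 := by
          have hDg : ∀ ω, D ω * g ω = ∑ l ∈ Finset.Ico n k, z l ω * g ω := by
            intro ω; simp only [hD]; rw [Finset.sum_mul]
          calc ∫ ω, D ω * g ω ∂P = ∫ ω, ∑ l ∈ Finset.Ico n k, z l ω * g ω ∂P := by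
                simp only [hDg]
            _ = ∑ l ∈ Finset.Ico n k, ∫ ω, z l ω * g ω ∂P :=
                integral_finset_sum _ fun l _ => BL_int_mul (hzL2 l) hgL2
            _ = 0 := by
                refine Finset.sum_eq_zero fun j hj => ?_
                have hjk : j < k := (Finset.mem_Ico.1 hj).2
                set S : Set (ℕ → ℝ) := {v | ε ≤ |BLR f j k N v|} ∩
                    ⋂ l ∈ Set.Ioc k N, {v | |BLR f j l N v| < ε} with hS
                have hSmeas : MeasurableSet S :=
                  (measurableSet_le measurable_const (BLR_meas hf j k N).abs).inter
                    (MeasurableSet.biInter (Set.to_countable _) fun l _ =>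
                      measurableSet_lt (BLR_meas hf j l N).abs measurable_const)
                have hgeq : ∀ ω, g ω =
                    S.indicator (BLR f j k N) (fun m => x (j + 1 + m) ω) := by
                  intro ω
                  have hmem : ω ∈ A k ↔ (fun m => x (j + 1 + m) ω) ∈ S := by
                    simp only [hA, hS, Set.mem_inter_iff, Set.mem_setOf_eq,
                      Set.mem_iInter, Set.mem_Ioc]
                    constructor
                    · rintro ⟨ha, hb⟩
                      refine ⟨by rw [hBLR_eq j k N hjk ω]; exact ha, fun l hl => ?_⟩
                      rw [hBLR_eq j l N (lt_trans hjk hl.1) ω]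
                      exact hb l hl
                    · rintro ⟨ha, hb⟩
                      rw [hBLR_eq j k N hjk ω] at ha
                      refine ⟨ha, fun l hl => ?_⟩
                      have := hb l hl
                      rwa [hBLR_eq j l N (lt_trans hjk hl.1) ω] at this
                  by_cases hω : ω ∈ A k
                  · rw [hg]
                    rw [Set.indicator_of_mem hω, Set.indicator_of_mem (hmem.1 hω)]
                    exact (hBLR_eq j k N hjk ω).symm
                  · rw [hg]
                    rw [Set.indicator_of_notMem hω,
                      Set.indicator_of_notMem (fun hc => hω (hmem.2 hc))]
                have : (fun ω => z j ω * g ω) =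
                    fun ω => z j ω * S.indicator (BLR f j k N) (fun m => x (j + 1 + m) ω) := by
                  funext ω; rw [hgeq ω]
                rw [this]
                exact hcross0 j (S.indicator (BLR f j k N))
                  ((BLR_meas hf j k N).indicator hSmeas)
        have hDnn : 0 ≤ ∫ ω, (A k).indicator (fun ω => D ω ^ 2) ω ∂P :=
          integral_nonneg fun ω => Set.indicator_nonneg (fun ω _ => sq_nonneg _) ω
        have hgoal : ∫ ω, (A k).indicator (fun ω => R n N ω ^ 2) ω ∂P =
            ∫ ω, (A k).indicator (fun ω => D ω ^ 2) ω ∂P +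
              (2 * ∫ ω, D ω * g ω ∂P +
                ∫ ω, (A k).indicator (fun ω => R k N ω ^ 2) ω ∂P) := by
          have hint5 : Integrable (fun ω => 2 * (D ω * g ω) +
              (A k).indicator (fun ω' => R k N ω' ^ 2) ω) P := hint4.add hint3
          rw [integral_congr_ae (Filter.Eventually.of_forall hsplit),
            integral_add hint2 hint5, integral_add hint4 hint3,
            integral_const_mul 2 _]
        rw [← integral_indicator (hAmeas k), ← integral_indicator (hAmeas k)]
        rw [hgoal, hcrossg]
        linarith
      linarith
    have hsum2 : ∑ k ∈ Finset.Icc n N, ε ^ 2 * (P (A k)).toReal ≤ ∫ ω, R n N ω ^ 2 ∂P := by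
      calc ∑ k ∈ Finset.Icc n N, ε ^ 2 * (P (A k)).toReal
          ≤ ∑ k ∈ Finset.Icc n N, ∫ ω in A k, R n N ω ^ 2 ∂P := Finset.sum_le_sum hkey
        _ = ∫ ω in ⋃ k ∈ Finset.Icc n N, A k, R n N ω ^ 2 ∂P :=
            (integral_biUnion_finset _ (fun k _ => hAmeas k) hdisj
              (fun k _ => (hRL2 n N).integrable_sq.integrableOn)).symm
        _ ≤ ∫ ω, R n N ω ^ 2 ∂P := setIntegral_le_integral (hRL2 n N).integrable_sq
            (Filter.Eventually.of_forall fun ω => sq_nonneg _)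
    have hPsum : (P {ω | ∃ k, n ≤ k ∧ k ≤ N ∧ ε ≤ |R k N ω|}).toReal ≤
        ∑ k ∈ Finset.Icc n N, (P (A k)).toReal := by
      have h1 : P {ω | ∃ k, n ≤ k ∧ k ≤ N ∧ ε ≤ |R k N ω|} ≤
          ∑ k ∈ Finset.Icc n N, P (A k) :=
        le_trans (measure_mono hcover) (measure_biUnion_finset_le _ _)
      have hne : (∑ k ∈ Finset.Icc n N, P (A k)) ≠ ⊤ :=
        (ENNReal.sum_lt_top.mpr fun k _ => measure_lt_top P _).ne
      have h2 := ENNReal.toReal_mono hne h1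
      rwa [ENNReal.toReal_sum fun k _ => measure_ne_top P _] at h2
    have hfinal : ε ^ 2 * (P {ω | ∃ k, n ≤ k ∧ k ≤ N ∧ ε ≤ |R k N ω|}).toReal ≤
        ∑ l ∈ Finset.Ico n N, ∫ ω, z l ω ^ 2 ∂P := by
      calc ε ^ 2 * (P {ω | ∃ k, n ≤ k ∧ k ≤ N ∧ ε ≤ |R k N ω|}).toReal
          ≤ ε ^ 2 * ∑ k ∈ Finset.Icc n N, (P (A k)).toReal :=
            mul_le_mul_of_nonneg_left hPsum (sq_nonneg ε)
        _ = ∑ k ∈ Finset.Icc n N, ε ^ 2 * (P (A k)).toReal := Finset.mul_sum _ _ _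
        _ ≤ ∫ ω, R n N ω ^ 2 ∂P := hsum2
        _ = ∑ l ∈ Finset.Ico n N, ∫ ω, z l ω ^ 2 ∂P := hsumsq n N
    have hlift := ENNReal.ofReal_le_ofReal hfinal
    rw [ENNReal.ofReal_mul (sq_nonneg ε), ENNReal.ofReal_toReal (measure_ne_top P _)] at hlift
    refine le_trans hlift ?_
    rw [ENNReal.ofReal_sum_of_nonneg fun l _ => integral_nonneg fun ω => sq_nonneg _]
    exact le_of_eq (Finset.sum_congr rfl fun l _ => hVeq l)
  -- null sets of non-Cauchy behaviour
  have htail0 : Tendsto (fun n => ∑' k, V (k + n)) atTop (𝓝 0) :=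
    ENNReal.tendsto_sum_nat_add V hsum.ne
  have hnull : ∀ m : ℕ, P (⋂ n, ⋃ N,
      {ω | ∃ k, n ≤ k ∧ k ≤ N ∧ (1 / ((m : ℝ) + 1)) ≤ |R k N ω|}) = 0 := by
    intro m
    set ε : ℝ := 1 / ((m : ℝ) + 1) with hεdef
    have hε : 0 < ε := by positivity
    set c := P (⋂ n, ⋃ N, {ω | ∃ k, n ≤ k ∧ k ≤ N ∧ ε ≤ |R k N ω|}) with hc
    have hbound : ∀ n, ENNReal.ofReal ((ε / 2) ^ 2) * c ≤ ∑' k, V (k + n) := by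
      intro n
      have hc2 : ∀ N₀ : ℕ, ENNReal.ofReal ((ε / 2) ^ 2) *
          P (Set.accumulate (fun N => {ω | ∃ k, n ≤ k ∧ k ≤ N ∧ ε ≤ |R k N ω|}) N₀) ≤
            ∑' k, V (k + n) := by
        intro N₀
        have hsub : Set.accumulate (fun N => {ω | ∃ k, n ≤ k ∧ k ≤ N ∧ ε ≤ |R k N ω|}) N₀ ⊆
            {ω | ∃ k, n ≤ k ∧ k ≤ N₀ ∧ ε / 2 ≤ |R k N₀ ω|} := by
          rintro ω hω
          obtain ⟨N, hNN₀, k, hk1, hk2, hk3⟩ := Set.mem_accumulate.1 hω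
          have hsplit : R k N ω = R k N₀ ω - R N N₀ ω := by
            have := Finset.sum_Ico_consecutive (fun l => z l ω) hk2 hNN₀
            simp only [hR]
            linarith [this]
          by_cases hcase : ε / 2 ≤ |R k N₀ ω|
          · exact ⟨k, hk1, le_trans hk2 hNN₀, hcase⟩
          · refine ⟨N, le_trans hk1 hk2, hNN₀, ?_⟩
            push_neg at hcase
            have habs : |R k N ω| ≤ |R k N₀ ω| + |R N N₀ ω| := by
              rw [hsplit]; exact abs_sub _ _
            linarith [hk3, habs, hcase]
        calc ENNReal.ofReal ((ε / 2) ^ 2) *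
            P (Set.accumulate (fun N => {ω | ∃ k, n ≤ k ∧ k ≤ N ∧ ε ≤ |R k N ω|}) N₀)
            ≤ ENNReal.ofReal ((ε / 2) ^ 2) *
              P {ω | ∃ k, n ≤ k ∧ k ≤ N₀ ∧ ε / 2 ≤ |R k N₀ ω|} :=
              mul_le_mul_right (measure_mono hsub) _
          _ ≤ ∑ l ∈ Finset.Ico n N₀, V l := hmax (ε / 2) (by positivity) n N₀
          _ ≤ ∑' k, V (k + n) := by
              rw [Finset.sum_Ico_eq_sum_range]
              refine le_trans (ENNReal.sum_le_tsum (Finset.range (N₀ - n))) ?_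
              exact le_of_eq (tsum_congr fun k => by rw [add_comm])
      have hcle : c ≤ P (⋃ N, {ω | ∃ k, n ≤ k ∧ k ≤ N ∧ ε ≤ |R k N ω|}) :=
        measure_mono (Set.iInter_subset _ n)
      calc ENNReal.ofReal ((ε / 2) ^ 2) * c
          ≤ ENNReal.ofReal ((ε / 2) ^ 2) *
            P (⋃ N, {ω | ∃ k, n ≤ k ∧ k ≤ N ∧ ε ≤ |R k N ω|}) := mul_le_mul_right hcle _
        _ = ENNReal.ofReal ((ε / 2) ^ 2) * ⨆ N₀,
            P (Set.accumulate (fun N => {ω | ∃ k, n ≤ k ∧ k ≤ N ∧ ε ≤ |R k N ω|}) N₀) := by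
            rw [measure_iUnion_eq_iSup_accumulate]
        _ = ⨆ N₀, ENNReal.ofReal ((ε / 2) ^ 2) *
            P (Set.accumulate (fun N => {ω | ∃ k, n ≤ k ∧ k ≤ N ∧ ε ≤ |R k N ω|}) N₀) :=
            ENNReal.mul_iSup _ _
        _ ≤ ∑' k, V (k + n) := iSup_le hc2
    have hle0 : ENNReal.ofReal ((ε / 2) ^ 2) * c ≤ 0 :=
      ge_of_tendsto htail0 (Filter.Eventually.of_forall hbound)
    have hne0 : ENNReal.ofReal ((ε / 2) ^ 2) ≠ 0 :=
      (ENNReal.ofReal_pos.2 (by positivity)).ne'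
    rcases mul_eq_zero.1 (le_antisymm hle0 (by positivity)) with h | h
    · exact absurd h hne0
    · exact h
  -- almost sure convergence
  have hCauchy : ∀ᵐ ω ∂P, CauchySeq fun N => ∑ j ∈ Finset.range N, z j ω := by
    have hnull2 : P (⋃ m : ℕ, ⋂ n, ⋃ N,
        {ω | ∃ k, n ≤ k ∧ k ≤ N ∧ (1 / ((m : ℝ) + 1)) ≤ |R k N ω|}) = 0 :=
      measure_iUnion_null fun m => hnull m
    have hsubset : {ω | ¬ CauchySeq fun N => ∑ j ∈ Finset.range N, z j ω} ⊆
        ⋃ m : ℕ, ⋂ n, ⋃ N,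
          {ω | ∃ k, n ≤ k ∧ k ≤ N ∧ (1 / ((m : ℝ) + 1)) ≤ |R k N ω|} := by
      intro ω hω
      simp only [Set.mem_setOf_eq] at hω
      rw [Metric.cauchySeq_iff] at hω
      push_neg at hω
      obtain ⟨ε, hε, hbad⟩ := hω
      obtain ⟨m, hm⟩ := exists_nat_one_div_lt hε
      refine Set.mem_iUnion.2 ⟨m, Set.mem_iInter.2 fun n => ?_⟩
      obtain ⟨a, ha, b, hb, hdist⟩ := hbad n
      have hRab : ∀ u v : ℕ, u ≤ v →
          R u v ω = (∑ j ∈ Finset.range v, z j ω) - ∑ j ∈ Finset.range u, z j ω := by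
        intro u v huv
        simp only [hR]
        exact Finset.sum_Ico_eq_sub _ huv
      rcases le_total a b with hab | hab
      · refine Set.mem_iUnion.2 ⟨b, a, ha, hab, ?_⟩
        rw [hRab a b hab, ← Real.dist_eq, dist_comm]
        exact le_trans (le_of_lt hm) hdist
      · refine Set.mem_iUnion.2 ⟨a, b, hb, hab, ?_⟩
        rw [hRab b a hab, ← Real.dist_eq]
        exact le_trans (le_of_lt hm) hdist
    have h0 : P {ω | ¬ CauchySeq fun N => ∑ j ∈ Finset.range N, z j ω} = 0 :=
      measure_mono_null hsubset hnull2
    rw [ae_iff]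
    exact h0
  have hconv : ∀ᵐ ω ∂P, ∃ l : ℝ,
      Tendsto (fun N => ∑ j ∈ Finset.range N, z j ω) atTop (𝓝 l) :=
    hCauchy.mono fun ω h => cauchySeq_tendsto_of_complete h
  refine ⟨hconv, fun n => ?_⟩
  -- second part via Fatou
  have hIccBound : ∀ N, (∫⁻ ω, ENNReal.ofReal ((∑ j ∈ Finset.Icc n N, z j ω) ^ 2) ∂P) ≤
      ∑' j, V j := by
    intro N
    have h1 : ∀ ω, (∑ j ∈ Finset.Icc n N, z j ω) = R n (N + 1) ω := by
      intro ω; simp only [hR]; rw [Finset.Ico_add_one_right_eq_Icc]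
    calc (∫⁻ ω, ENNReal.ofReal ((∑ j ∈ Finset.Icc n N, z j ω) ^ 2) ∂P)
        = ∫⁻ ω, ENNReal.ofReal (R n (N + 1) ω ^ 2) ∂P := by
          refine lintegral_congr fun ω => ?_
          rw [h1 ω]
      _ = ENNReal.ofReal (∫ ω, R n (N + 1) ω ^ 2 ∂P) :=
          (ofReal_integral_eq_lintegral_ofReal (hRL2 n (N + 1)).integrable_sq
            (Filter.Eventually.of_forall fun ω => sq_nonneg _)).symm
      _ = ENNReal.ofReal (∑ l ∈ Finset.Ico n (N + 1), ∫ ω, z l ω ^ 2 ∂P) := by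
          rw [hsumsq]
      _ = ∑ l ∈ Finset.Ico n (N + 1), V l := by
          rw [ENNReal.ofReal_sum_of_nonneg fun l _ => integral_nonneg fun ω => sq_nonneg _]
          exact Finset.sum_congr rfl fun l _ => hVeq l
      _ ≤ ∑' l, V l := ENNReal.sum_le_tsum _
  have hae : (fun ω => ENNReal.ofReal
        ((limUnder atTop fun N => ∑ j ∈ Finset.Icc n N, z j ω) ^ 2)) =ᵐ[P]
      fun ω => atTop.liminf fun N =>
        ENNReal.ofReal ((∑ j ∈ Finset.Icc n N, z j ω) ^ 2) := by
    filter_upwards [hconv] with ω hω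
    obtain ⟨l, hl⟩ := hω
    have htd : Tendsto (fun N => ∑ j ∈ Finset.Icc n N, z j ω) atTop
        (𝓝 (l - ∑ j ∈ Finset.range n, z j ω)) := by
      have h1 : Tendsto (fun N => (∑ j ∈ Finset.range (N + 1), z j ω) -
          ∑ j ∈ Finset.range n, z j ω) atTop
            (𝓝 (l - ∑ j ∈ Finset.range n, z j ω)) :=
        ((hl.comp (tendsto_add_atTop_nat 1)).sub tendsto_const_nhds)
      refine Tendsto.congr' ?_ h1
      filter_upwards [eventually_ge_atTop n] with N hN
      rw [← Finset.Ico_add_one_right_eq_Icc]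
      exact (Finset.sum_Ico_eq_sub _ (by omega)).symm
    have hlim : (limUnder atTop fun N => ∑ j ∈ Finset.Icc n N, z j ω) =
        l - ∑ j ∈ Finset.range n, z j ω := htd.limUnder_eq
    rw [hlim]
    have htd2 : Tendsto (fun N => ENNReal.ofReal ((∑ j ∈ Finset.Icc n N, z j ω) ^ 2))
        atTop (𝓝 (ENNReal.ofReal ((l - ∑ j ∈ Finset.range n, z j ω) ^ 2))) :=
      ENNReal.tendsto_ofReal (htd.pow 2)
    exact htd2.liminf_eq.symm
  calc ∫⁻ ω, ENNReal.ofReal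
        ((limUnder atTop fun N => ∑ j ∈ Finset.Icc n N, z j ω) ^ 2) ∂P
      = ∫⁻ ω, atTop.liminf
          (fun N => ENNReal.ofReal ((∑ j ∈ Finset.Icc n N, z j ω) ^ 2)) ∂P :=
        lintegral_congr_ae hae
    _ ≤ atTop.liminf fun N =>
          ∫⁻ ω, ENNReal.ofReal ((∑ j ∈ Finset.Icc n N, z j ω) ^ 2) ∂P :=
        lintegral_liminf_le fun N =>
          ENNReal.measurable_ofReal.comp
            ((Finset.measurable_sum _ fun j _ => hzm j).pow_const 2)
    _ ≤ ∑' j, V j := by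
        refine le_trans (liminf_le_liminf (Filter.Eventually.of_forall hIccBound)) ?_
        rw [liminf_const]
end

section
/- Let a : {1,2,…} → (0, ∞) (with the convention a(0) = 1), b : {1,2,…} → ℝ, and E ∈ ℝ. Let (b̃_ω(n))_{n≥1} be independent integrable real-valued random variables on a probability space (Ω, F, P) with ⟨b̃(n)⟩ = 0 for every n, and let F_n be the σ-algebra generated by b̃(1), …, b̃(n). Let T₀^E(n) be the n-step transfer matrices for (a, b) and T_ω^E(n) those for (a, b + b̃_ω), and define D_ω(n) = T₀^E(n)^{−1} · T_ω^E(n) for n ≥ 1, with D_ω(0) = I. Then every matrix entry of D_ω(n) is integrable and (D_ω(n))_{n≥0} is a matrix-valued martingale with respect to the filtration (F_n): for every n ≥ 1, the conditional expectation of D_ω(n) given F_{n−1} equals D_ω(n−1) almost surely (entrywise). -/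
open MeasureTheory ProbabilityTheory Filter
open scoped ENNReal Topology

/-- The single-step transfer matrix `S^E(n)` for the Jacobi matrix with
off-diagonal entries `a` (convention `a 0 = 1`) and diagonal entries `b`. -/
noncomputable def transferStep (a b : ℕ → ℝ) (E : ℝ) (n : ℕ) :
    Matrix (Fin 2) (Fin 2) ℝ :=
  !![(E - b n) / a n, -(a (n - 1)) / a n; 1, 0]

/-- The `n`-step transfer matrix `T^E(n) = S^E(n) ⬝ ⋯ ⬝ S^E(1)`. -/
noncomputable def transfer (a b : ℕ → ℝ) (E : ℝ) : ℕ → Matrix (Fin 2) (Fin 2) ℝ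
  | 0 => 1
  | n + 1 => transferStep a b E (n + 1) * transfer a b E n

/-- Perturbation direction matrix. -/
noncomputable def pertMat (a : ℕ → ℝ) (n : ℕ) : Matrix (Fin 2) (Fin 2) ℝ :=
  !![-(1 / a n), 0; 0, 0]

/-- Deterministic coefficient matrices in the recurrence for `D`. -/
noncomputable def coefMat (a b : ℕ → ℝ) (E : ℝ) (n : ℕ) : Matrix (Fin 2) (Fin 2) ℝ :=
  (transfer a b E (n + 1))⁻¹ * pertMat a (n + 1) * transfer a b E n

lemma transferStep_perturb (a b c : ℕ → ℝ) (E : ℝ) (n : ℕ) :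
    transferStep a (fun m => b m + c m) E n
      = transferStep a b E n + c n • pertMat a n := by
  ext i j
  fin_cases i <;> fin_cases j <;>
    simp [transferStep, pertMat, Matrix.add_apply] <;> ring

/-- the martingale remark after the proof of Theorem 1.1 of
Breuer–Last: for a diagonal perturbation by independent integrable mean-zero
random variables `b̃ n`, the matrices `D_ω(n) = T₀^E(n)⁻¹ ⬝ T_ω^E(n)` have
integrable entries and form a matrix-valued martingale with respect to the
filtration generated by `b̃ 1, …, b̃ n`. -/
theorem transfer_ratio_is_martingale
    {Ω : Type*} [MeasurableSpace Ω] (P : Measure Ω) [IsProbabilityMeasure P]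
    (a : ℕ → ℝ) (ha0 : a 0 = 1) (hapos : ∀ n, 1 ≤ n → 0 < a n)
    (b : ℕ → ℝ) (E : ℝ)
    (tb : ℕ → Ω → ℝ) (htbmeas : ∀ n, Measurable (tb n))
    (hindep : iIndepFun tb P)
    (hint : ∀ n, Integrable (tb n) P)
    (hmean : ∀ n, ∫ ω, tb n ω ∂P = 0)
    (F : ℕ → MeasurableSpace Ω)
    (hF : ∀ n, F n = ⨆ i ∈ Finset.Icc 1 n,
      MeasurableSpace.comap (tb i) inferInstance)
    (D : Ω → ℕ → Matrix (Fin 2) (Fin 2) ℝ)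
    (hD : ∀ ω n, D ω n =
      (transfer a b E n)⁻¹ * transfer a (fun m => b m + tb m ω) E n) :
    (∀ n (i j : Fin 2), Integrable (fun ω => D ω n i j) P) ∧
      (∀ n, 1 ≤ n → ∀ i j : Fin 2,
        P[(fun ω => D ω n i j)|F (n - 1)] =ᵐ[P] fun ω => D ω (n - 1) i j) := by
  classical
  have hapos' : ∀ n, 0 < a n := by
    intro n
    rcases Nat.eq_zero_or_pos n with h | h
    · rw [h, ha0]; norm_num
    · exact hapos n h
  -- determinants
  have hdetS : ∀ n, IsUnit (transferStep a b E n).det := by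
    intro n
    have h : (transferStep a b E n).det = a (n - 1) / a n := by
      simp [transferStep, Matrix.det_fin_two_of]
      ring
    rw [h]
    exact isUnit_iff_ne_zero.mpr (div_pos (hapos' (n - 1)) (hapos' n)).ne'
  have hdetT : ∀ n, IsUnit (transfer a b E n).det := by
    intro n
    induction n with
    | zero => simp [transfer]
    | succ n ih =>
      rw [transfer, Matrix.det_mul]
      exact (hdetS (n + 1)).mul ih
  have hTinv : ∀ n, (transfer a b E n)⁻¹ * transfer a b E n = 1 :=
    fun n => Matrix.nonsing_inv_mul _ (hdetT n)
  have hTinv' : ∀ n, transfer a b E n * (transfer a b E n)⁻¹ = 1 :=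
    fun n => Matrix.mul_nonsing_inv _ (hdetT n)
  have eTw : ∀ ω n, transfer a b E n * D ω n
      = transfer a (fun m => b m + tb m ω) E n := by
    intro ω n
    rw [hD ω n, ← mul_assoc, hTinv' n, one_mul]
  -- recurrence for D
  have hrec : ∀ ω n,
      D ω (n + 1) = D ω n + tb (n + 1) ω • (coefMat a b E n * D ω n) := by
    intro ω n
    have hmul : transfer a b E (n + 1) * D ω (n + 1)
        = transfer a b E (n + 1)
            * (D ω n + tb (n + 1) ω • (coefMat a b E n * D ω n)) := by
      rw [eTw ω (n + 1)]
      have e1 : transfer a (fun m => b m + tb m ω) E (n + 1)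
          = transferStep a b E (n + 1) * transfer a (fun m => b m + tb m ω) E n
            + tb (n + 1) ω
                • (pertMat a (n + 1) * transfer a (fun m => b m + tb m ω) E n) := by
        show transferStep a (fun m => b m + tb m ω) E (n + 1) * _ = _
        rw [transferStep_perturb a b (fun m => tb m ω) E (n + 1), add_mul,
          smul_mul_assoc]
      rw [e1, mul_add, mul_smul_comm]
      congr 1
      · rw [← eTw ω n,
          show transfer a b E (n + 1) = transferStep a b E (n + 1) * transfer a b E n
            from rfl,
          mul_assoc]
      · congr 1
        rw [← eTw ω n, coefMat]
        simp only [← mul_assoc]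
        rw [hTinv' (n + 1), one_mul]
    calc D ω (n + 1)
        = ((transfer a b E (n + 1))⁻¹ * transfer a b E (n + 1)) * D ω (n + 1) := by
          rw [hTinv (n + 1), one_mul]
      _ = ((transfer a b E (n + 1))⁻¹ * transfer a b E (n + 1))
            * (D ω n + tb (n + 1) ω • (coefMat a b E n * D ω n)) := by
          rw [mul_assoc, hmul, ← mul_assoc]
      _ = _ := by rw [hTinv (n + 1), one_mul]
  have hentry : ∀ ω n (i j : Fin 2),
      D ω (n + 1) i j
        = D ω n i j + tb (n + 1) ω * ∑ k, coefMat a b E n i k * D ω n k j := by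
    intro ω n i j
    rw [hrec ω n]
    simp [Matrix.add_apply, Matrix.smul_apply, Matrix.mul_apply, Finset.mul_sum]
  -- filtration facts
  have hFle : ∀ n, F n ≤ ‹MeasurableSpace Ω› := by
    intro n; rw [hF n]
    exact iSup₂_le fun i _ => (htbmeas i).comap_le
  have hFmono : ∀ n, F n ≤ F (n + 1) := by
    intro n; rw [hF n, hF (n + 1)]
    refine iSup₂_le fun i hi => ?_
    refine le_iSup₂ (f := fun i (_ : i ∈ Finset.Icc 1 (n + 1)) =>
      MeasurableSpace.comap (tb i) inferInstance) i ?_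
    rw [Finset.mem_Icc] at hi ⊢
    omega
  have htbF : ∀ i n, i ∈ Finset.Icc 1 n → Measurable[F n] (tb i) := by
    intro i n hi
    refine measurable_iff_comap_le.mpr ?_
    rw [hF n]
    exact le_iSup₂ (f := fun i (_ : i ∈ Finset.Icc 1 n) =>
      MeasurableSpace.comap (tb i) inferInstance) i hi
  -- independence of tb (n+1) from F n
  have hIndepF : ∀ n,
      Indep (MeasurableSpace.comap (tb (n + 1)) inferInstance) (F n) P := by
    intro n
    have h := indep_biSup_compl (fun i => (htbmeas i).comap_le) hindep.iIndep
      ({n + 1} : Set ℕ)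
    refine indep_of_indep_of_le_right (indep_of_indep_of_le_left h ?_) ?_
    · exact le_iSup₂ (f := fun i (_ : i ∈ ({n + 1} : Set ℕ)) =>
        MeasurableSpace.comap (tb i) inferInstance) (n + 1) rfl
    · rw [hF n]
      refine iSup₂_le fun i hi => ?_
      refine le_iSup₂ (f := fun i (_ : i ∈ (({n + 1} : Set ℕ))ᶜ) =>
        MeasurableSpace.comap (tb i) inferInstance) i ?_
      rw [Finset.mem_Icc] at hi
      simp only [Set.mem_compl_iff, Set.mem_singleton_iff]
      omega
  -- main induction: integrability and F n-measurability of entries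
  have key : ∀ n (i j : Fin 2),
      Integrable (fun ω => D ω n i j) P ∧ Measurable[F n] (fun ω => D ω n i j) := by
    intro n
    induction n with
    | zero =>
      intro i j
      have h0 : ∀ ω, D ω 0 i j = (1 : Matrix (Fin 2) (Fin 2) ℝ) i j := by
        intro ω; rw [hD]; simp [transfer]
      constructor
      · simpa only [h0] using integrable_const ((1 : Matrix (Fin 2) (Fin 2) ℝ) i j)
      · simp only [h0]; exact measurable_const
    | succ n ih =>
      intro i j
      set g : Ω → ℝ := fun ω => ∑ k, coefMat a b E n i k * D ω n k j with hg
      have hg_meas : Measurable[F n] g :=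
        Finset.measurable_sum _ fun k _ => ((ih k j).2.const_mul _)
      have hg_int : Integrable g P :=
        integrable_finset_sum _ fun k _ => ((ih k j).1.const_mul _)
      have hIF : IndepFun (tb (n + 1)) g P := by
        rw [IndepFun_iff_Indep]
        exact indep_of_indep_of_le_right (hIndepF n) hg_meas.comap_le
      have hmul_int : Integrable (fun ω => tb (n + 1) ω * g ω) P :=
        hIF.integrable_mul (hint (n + 1)) hg_int
      have hfun : (fun ω => D ω (n + 1) i j)
          = fun ω => D ω n i j + tb (n + 1) ω * g ω :=
        funext fun ω => hentry ω n i j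
      constructor
      · rw [hfun]; exact (ih i j).1.add hmul_int
      · rw [hfun]
        exact ((ih i j).2.mono (hFmono n) le_rfl).add
          ((htbF (n + 1) (n + 1) (by simp)).mul (hg_meas.mono (hFmono n) le_rfl))
  refine ⟨fun n i j => (key n i j).1, ?_⟩
  rintro n hn i j
  obtain ⟨m, rfl⟩ : ∃ m, n = m + 1 := ⟨n - 1, by omega⟩
  simp only [Nat.add_sub_cancel]
  set g : Ω → ℝ := fun ω => ∑ k, coefMat a b E m i k * D ω m k j with hg
  have hg_meas : Measurable[F m] g :=
    Finset.measurable_sum _ fun k _ => ((key m k j).2.const_mul _)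
  have hg_int : Integrable g P :=
    integrable_finset_sum _ fun k _ => ((key m k j).1.const_mul _)
  have hIF : IndepFun (tb (m + 1)) g P := by
    rw [IndepFun_iff_Indep]
    exact indep_of_indep_of_le_right (hIndepF m) hg_meas.comap_le
  have hmul_int : Integrable (g * tb (m + 1)) P :=
    hIF.symm.integrable_mul hg_int (hint (m + 1))
  have hfun : (fun ω => D ω (m + 1) i j)
      = (fun ω => D ω m i j) + g * tb (m + 1) := by
    funext ω
    simp only [Pi.add_apply, Pi.mul_apply]
    rw [hentry ω m i j, mul_comm]
  have h2 : P[(fun ω => D ω m i j)|F m] = fun ω => D ω m i j :=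
    condExp_of_stronglyMeasurable (hFle m) ((key m i j).2.stronglyMeasurable)
      (key m i j).1
  have h3 : P[g * tb (m + 1)|F m] =ᵐ[P] g * P[tb (m + 1)|F m] :=
    condExp_mul_of_stronglyMeasurable_left hg_meas.stronglyMeasurable hmul_int (hint (m + 1))
  have h4 : P[tb (m + 1)|F m] =ᵐ[P] fun _ => ∫ ω, tb (m + 1) ω ∂P :=
    condExp_indep_eq (htbmeas (m + 1)).comap_le (hFle m)
      (Measurable.stronglyMeasurable (measurable_iff_comap_le.mpr le_rfl))
      (hIndepF m)
  calc P[(fun ω => D ω (m + 1) i j)|F m]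
      =ᵐ[P] P[(fun ω => D ω m i j)|F m] + P[g * tb (m + 1)|F m] := by
        rw [hfun]; exact condExp_add (key m i j).1 hmul_int (F m)
    _ =ᵐ[P] fun ω => D ω m i j := by
        rw [h2]
        filter_upwards [h3, h4] with ω hω3 hω4
        simp only [Pi.add_apply, Pi.mul_apply] at hω3 ⊢
        rw [hω3, hω4, hmean (m + 1), mul_zero, add_zero]
end
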